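/- A simple random walk on ℤ (step ±1 with probability 1/2 each) started at any s₀ ∈ ℤ hits any goal g ∈ ℤ almost surely, i.e., the first hitting time τ = inf{t > 0 : S_t = g} is finite with probability 1. -/

import Mathlib

open MeasureTheory ProbabilityTheory Filter
open scoped ENNReal

set_option linter.unusedSectionVars false
set_option linter.unusedVariables false
set_option maxHeartbeats 1000000
attribute [local instance] Classical.propDecidable

section SRWAux
variable {Ω : Type*} [MeasurableSpace Ω] {μ : Measure Ω} [IsProbabilityMeasure μ]
  {X : ℕ → Ω → ℤ}

lemma int_meas (s : Set ℤ) : MeasurableSet s := (Set.to_countable s).measurableSet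

def srwPat (n : ℕ) (ε : Fin n → Bool) : ℕ → ℤ := fun i =>
  if h : i < n then (if ε ⟨i, h⟩ then 1 else -1) else 0

lemma srw_atom (hindep : iIndepFun X μ)
    (hup : ∀ i, μ {ω | X i ω = 1} = 1/2) (hdown : ∀ i, μ {ω | X i ω = -1} = 1/2)
    (S : Finset ℕ) (e : ℕ → ℤ) (he : ∀ i ∈ S, e i = 1 ∨ e i = -1) :
    μ (⋂ i ∈ S, X i ⁻¹' {e i}) = (2⁻¹ : ℝ≥0∞) ^ S.card := by
  have hs : ∀ i ∈ S, MeasurableSet[MeasurableSpace.comap (X i) inferInstance] (X i ⁻¹' {e i}) :=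
    fun i _ => ⟨{e i}, measurableSet_singleton _, rfl⟩
  rw [hindep.meas_biInter hs]
  rw [show (2⁻¹ : ℝ≥0∞) ^ S.card = ∏ _i ∈ S, (2⁻¹ : ℝ≥0∞) by rw [Finset.prod_const]]
  refine Finset.prod_congr rfl fun i hi => ?_
  have : X i ⁻¹' {e i} = {ω | X i ω = e i} := rfl
  rw [this]
  rcases he i hi with h | h <;> rw [h]
  · rw [hup i]; norm_num
  · rw [hdown i]; norm_num

lemma srw_ae_sign (hmeas : ∀ i, Measurable (X i))
    (hup : ∀ i, μ {ω | X i ω = 1} = 1/2) (hdown : ∀ i, μ {ω | X i ω = -1} = 1/2) :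
    ∀ᵐ ω ∂μ, ∀ i, X i ω = 1 ∨ X i ω = -1 := by
  rw [ae_all_iff]
  intro i
  have h1 : MeasurableSet {ω | X i ω = 1} := (hmeas i) (measurableSet_singleton 1)
  have h2 : MeasurableSet {ω | X i ω = -1} := (hmeas i) (measurableSet_singleton (-1))
  have hd : Disjoint {ω | X i ω = 1} {ω | X i ω = -1} := by
    rw [Set.disjoint_left]; rintro ω (h : X i ω = 1) (h' : X i ω = -1); omega
  have hu : μ ({ω | X i ω = 1} ∪ {ω | X i ω = -1}) = 1 := by
    rw [measure_union hd h2, hup, hdown]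
    rw [ENNReal.div_add_div_same, one_add_one_eq_two]
    exact ENNReal.div_self (by norm_num) (by norm_num)
  have := prob_compl_eq_zero_iff (h1.union h2) |>.2 hu
  filter_upwards [MeasureTheory.measure_eq_zero_iff_ae_notMem.1 this] with ω hω
  simpa [Set.mem_union, or_iff_not_imp_left] using hω

lemma srw_cylinder (hmeas : ∀ i, Measurable (X i))
    (hindep : iIndepFun X μ)
    (hup : ∀ i, μ {ω | X i ω = 1} = 1/2) (hdown : ∀ i, μ {ω | X i ω = -1} = 1/2)
    (n : ℕ) (P : (ℕ → ℤ) → Prop)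
    (hP : ∀ f g : ℕ → ℤ, (∀ i < n, f i = g i) → P f → P g) :
    μ {ω | P (fun i => X i ω)} =
      (Finset.univ.filter (fun ε : Fin n → Bool => P (srwPat n ε))).card * (2⁻¹ : ℝ≥0∞) ^ n := by
  set F := Finset.univ.filter (fun ε : Fin n → Bool => P (srwPat n ε)) with hF
  set atom : (Fin n → Bool) → Set Ω :=
    fun ε => ⋂ i ∈ Finset.range n, X i ⁻¹' {srwPat n ε i} with hatomdef
  have hpatval : ∀ (ε : Fin n → Bool) i, i ∈ Finset.range n → srwPat n ε i = 1 ∨ srwPat n ε i = -1 := by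
    intro ε i hi
    have hi' := Finset.mem_range.1 hi
    simp only [srwPat, dif_pos hi']
    cases ε ⟨i, hi'⟩ <;> simp
  have hatom : ∀ ε, μ (atom ε) = (2⁻¹ : ℝ≥0∞) ^ n := by
    intro ε
    have h := srw_atom hindep hup hdown (Finset.range n) (srwPat n ε) (hpatval ε)
    rw [Finset.card_range] at h
    exact h
  have hmeasatom : ∀ ε, MeasurableSet (atom ε) := fun ε =>
    Finset.measurableSet_biInter _ (fun i _ => (hmeas i) (measurableSet_singleton _))
  have hdisj : Set.PairwiseDisjoint (↑F) atom := by
    intro ε hε ε' hε' hne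
    obtain ⟨i, hi⟩ : ∃ i, ε i ≠ ε' i := by
      by_contra h; push_neg at h; exact hne (funext h)
    rw [Function.onFun, Set.disjoint_left]
    intro ω hω hω'
    have h1 : X i.1 ω = srwPat n ε i.1 := by
      have := Set.mem_iInter₂.1 hω i.1 (Finset.mem_range.2 i.2); simpa using this
    have h2 : X i.1 ω = srwPat n ε' i.1 := by
      have := Set.mem_iInter₂.1 hω' i.1 (Finset.mem_range.2 i.2); simpa using this
    have : srwPat n ε i.1 ≠ srwPat n ε' i.1 := by
      simp only [srwPat, dif_pos i.2]
      cases hb : ε i <;> cases hb' : ε' i <;>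
        simp_all [Fin.eta]
    exact this (h1 ▸ h2)
  have hcong : {ω | P (fun i => X i ω)} =ᵐ[μ] ⋃ ε ∈ F, atom ε := by
    filter_upwards [srw_ae_sign hmeas hup hdown] with ω hω
    have hkey : ∀ ε₀ : Fin n → Bool, (∀ i : Fin n, ε₀ i = decide (X i.1 ω = 1)) →
        ∀ i, i < n → X i ω = srwPat n ε₀ i := by
      intro ε₀ hε₀ i hi
      simp only [srwPat, dif_pos hi]
      rcases hω i with h | h
      · rw [hε₀ ⟨i, hi⟩]; simp [h]
      · rw [hε₀ ⟨i, hi⟩]; simp [h]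
    show P (fun i => X i ω) = _
    rw [eq_iff_iff]
    constructor
    · intro hp
      set ε₀ : Fin n → Bool := fun i => decide (X i.1 ω = 1) with hε₀
      have h1 : P (srwPat n ε₀) := hP _ _ (hkey ε₀ (fun i => rfl)) hp
      have h2 : ω ∈ atom ε₀ := Set.mem_iInter₂.2 fun i hi => by
        simpa using hkey ε₀ (fun i => rfl) i (Finset.mem_range.1 hi)
      exact Set.mem_biUnion (Finset.mem_filter.2 ⟨Finset.mem_univ ε₀, h1⟩) h2
    · intro hmem
      obtain ⟨ε, hεF, hωa⟩ := Set.mem_iUnion₂.1 hmem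
      have hPε := (Finset.mem_filter.1 hεF).2
      refine hP _ _ (fun i hi => ?_) hPε
      have h3 : X i ω = srwPat n ε i := by
        simpa using Set.mem_iInter₂.1 hωa i (Finset.mem_range.2 hi)
      exact h3.symm
  rw [measure_congr hcong, measure_biUnion_finset hdisj (fun ε _ => hmeasatom ε)]
  simp [hatom, Finset.sum_const, nsmul_eq_mul]

lemma srw_tail_meas (Y : ℕ → Ω → ℤ)
    (hY : ∀ i, Measurable[MeasurableSpace.comap (X i) inferInstance] (Y i)) :
    MeasurableSet[Filter.limsup (fun i => MeasurableSpace.comap (X i) inferInstance) Filter.atTop]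
      {ω | ∀ M : ℕ, ∃ n, (M:ℤ) ≤ ∑ i ∈ Finset.range n, Y i ω} := by
  rw [Filter.limsup_eq_iInf_iSup_of_nat, MeasurableSpace.measurableSet_iInf]
  intro k
  have hset : {ω | ∀ M : ℕ, ∃ n, (M:ℤ) ≤ ∑ i ∈ Finset.range n, Y i ω}
      = ⋂ M : ℕ, ⋃ n : ℕ, {ω | (M:ℤ) ≤ ∑ i ∈ Finset.Ico k (k+n), Y i ω} := by
    ext ω
    simp only [Set.mem_iInter, Set.mem_iUnion, Set.mem_setOf_eq]
    constructor
    · intro h M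
      set C : ℤ := max ((M:ℤ) + ∑ i ∈ Finset.range k, Y i ω)
        (((Finset.range (k+1)).sup (fun j => (∑ i ∈ Finset.range j, Y i ω).toNat) : ℕ) + 1) with hC
      obtain ⟨n, hn⟩ := h C.toNat
      have hCn : C ≤ ∑ i ∈ Finset.range n, Y i ω := le_trans (Int.self_le_toNat C) hn
      have hkn : k ≤ n := by
        by_contra hlt
        push_neg at hlt
        have hmem : n ∈ Finset.range (k+1) := Finset.mem_range.2 (by omega)
        have h1 : (∑ i ∈ Finset.range n, Y i ω).toNat
            ≤ (Finset.range (k+1)).sup (fun j => (∑ i ∈ Finset.range j, Y i ω).toNat) :=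
          Finset.le_sup (f := fun j => (∑ i ∈ Finset.range j, Y i ω).toNat) hmem
        have h2 : ∑ i ∈ Finset.range n, Y i ω ≤
            ((Finset.range (k+1)).sup (fun j => (∑ i ∈ Finset.range j, Y i ω).toNat) : ℕ) :=
          le_trans (Int.self_le_toNat _) (by exact_mod_cast h1)
        have h3 := le_max_right ((M:ℤ) + ∑ i ∈ Finset.range k, Y i ω)
          ((((Finset.range (k+1)).sup (fun j => (∑ i ∈ Finset.range j, Y i ω).toNat) : ℕ) : ℤ) + 1)
        omega
      refine ⟨n - k, ?_⟩
      have hsplit : ∑ i ∈ Finset.range n, Y i ω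
          = ∑ i ∈ Finset.range k, Y i ω + ∑ i ∈ Finset.Ico k (k + (n - k)), Y i ω := by
        rw [show k + (n - k) = n from by omega, Finset.range_eq_Ico, Finset.range_eq_Ico,
          Finset.sum_Ico_consecutive _ (Nat.zero_le k) hkn]
      have h4 := le_max_left ((M:ℤ) + ∑ i ∈ Finset.range k, Y i ω)
        ((((Finset.range (k+1)).sup (fun j => (∑ i ∈ Finset.range j, Y i ω).toNat) : ℕ) : ℤ) + 1)
      omega
    · intro h M
      obtain ⟨n, hn⟩ := h ((M:ℤ) - ∑ i ∈ Finset.range k, Y i ω).toNat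
      refine ⟨k + n, ?_⟩
      have hsplit : ∑ i ∈ Finset.range (k+n), Y i ω
          = ∑ i ∈ Finset.range k, Y i ω + ∑ i ∈ Finset.Ico k (k + n), Y i ω := by
        rw [Finset.range_eq_Ico, Finset.range_eq_Ico, Finset.sum_Ico_consecutive _ (Nat.zero_le k) (by omega)]
      have := le_trans (Int.self_le_toNat ((M:ℤ) - ∑ i ∈ Finset.range k, Y i ω)) hn
      omega
  rw [hset]
  have hYm : ∀ i, k ≤ i → Measurable[⨆ i, ⨆ (_ : i ≥ k), MeasurableSpace.comap (X i) inferInstance] (Y i) := by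
    intro i hi
    exact (hY i).mono (le_iSup₂ (f := fun i (_ : i ≥ k) => MeasurableSpace.comap (X i) inferInstance) i hi) le_rfl
  refine MeasurableSet.iInter fun M => MeasurableSet.iUnion fun n => ?_
  have hsum : Measurable[⨆ i, ⨆ (_ : i ≥ k), MeasurableSpace.comap (X i) inferInstance]
      (fun ω => ∑ i ∈ Finset.Ico k (k+n), Y i ω) :=
    Finset.measurable_sum _ (fun i hi => hYm i (Finset.mem_Ico.1 hi).1)
  exact hsum (int_meas (Set.Ici (M:ℤ)))

lemma srw_unbdd_measure (Y : ℕ → Ω → ℤ) (hY : ∀ i, Measurable (Y i)) :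
    μ {ω | ∀ M : ℕ, ∃ n, (M:ℤ) ≤ ∑ i ∈ Finset.range n, Y i ω}
      = ⨅ M : ℕ, ⨆ n : ℕ, μ {ω | ∃ m ≤ n, (M:ℤ) ≤ ∑ i ∈ Finset.range m, Y i ω} := by
  have hmeasE : ∀ (M n : ℕ), MeasurableSet {ω | ∃ m ≤ n, (M:ℤ) ≤ ∑ i ∈ Finset.range m, Y i ω} := by
    intro M n
    have : {ω | ∃ m ≤ n, (M:ℤ) ≤ ∑ i ∈ Finset.range m, Y i ω}
        = ⋃ m ∈ Finset.range (n+1), (fun ω => ∑ i ∈ Finset.range m, Y i ω) ⁻¹' Set.Ici (M:ℤ) := by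
      ext ω
      simp only [Set.mem_iUnion, Finset.mem_range, Set.mem_setOf_eq, Set.mem_preimage,
        Set.mem_Ici]
      constructor
      · rintro ⟨m, hm, h⟩; exact ⟨m, by omega, h⟩
      · rintro ⟨m, hm, h⟩; exact ⟨m, by omega, h⟩
    rw [this]
    exact MeasurableSet.biUnion (Finset.range (n+1)).countable_toSet
      (fun m _ => (Finset.measurable_sum _ fun i _ => hY i) (int_meas _))
  have hset : {ω | ∀ M : ℕ, ∃ n, (M:ℤ) ≤ ∑ i ∈ Finset.range n, Y i ω}
      = ⋂ M : ℕ, ⋃ n : ℕ, {ω | ∃ m ≤ n, (M:ℤ) ≤ ∑ i ∈ Finset.range m, Y i ω} := by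
    ext ω
    simp only [Set.mem_iInter, Set.mem_iUnion, Set.mem_setOf_eq]
    exact ⟨fun h M => (h M).imp (fun n hn => ⟨n, le_rfl, hn⟩),
      fun h M => by obtain ⟨n, m, _, hm⟩ := h M; exact ⟨m, hm⟩⟩
  rw [hset]
  have hUdir : ∀ M : ℕ, Directed (· ⊆ ·)
      (fun n => {ω | ∃ m ≤ n, (M:ℤ) ≤ ∑ i ∈ Finset.range m, Y i ω}) := by
    intro M
    have hmono : Monotone (fun n => {ω | ∃ m ≤ n, (M:ℤ) ≤ ∑ i ∈ Finset.range m, Y i ω}) := by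
      intro a b hab ω ⟨m, hm, h⟩; exact ⟨m, le_trans hm hab, h⟩
    exact hmono.directed_le
  have hinter : Directed (· ⊇ ·)
      (fun M : ℕ => ⋃ n : ℕ, {ω | ∃ m ≤ n, (M:ℤ) ≤ ∑ i ∈ Finset.range m, Y i ω}) := by
    have hanti : Antitone (fun M : ℕ => ⋃ n : ℕ, {ω | ∃ m ≤ n, (M:ℤ) ≤ ∑ i ∈ Finset.range m, Y i ω}) := by
      intro a b hab ω hω
      obtain ⟨n, m, hm, h⟩ := Set.mem_iUnion.1 hω
      exact Set.mem_iUnion.2 ⟨n, m, hm, le_trans (by exact_mod_cast hab) h⟩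
    exact hanti.directed_ge
  rw [Directed.measure_iInter (fun M => ((MeasurableSet.iUnion (fun n => hmeasE M n)).nullMeasurableSet))
    hinter ⟨0, measure_ne_top μ _⟩]
  exact iInf_congr fun M => Directed.measure_iUnion (hUdir M)

lemma srw_symm (hmeas : ∀ i, Measurable (X i))
    (hindep : iIndepFun X μ)
    (hup : ∀ i, μ {ω | X i ω = 1} = 1/2) (hdown : ∀ i, μ {ω | X i ω = -1} = 1/2) :
    μ {ω | ∀ M : ℕ, ∃ n, (M:ℤ) ≤ ∑ i ∈ Finset.range n, X i ω}
      = μ {ω | ∀ M : ℕ, ∃ n, (M:ℤ) ≤ ∑ i ∈ Finset.range n, -X i ω} := by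
  rw [srw_unbdd_measure X hmeas, srw_unbdd_measure (fun i ω => -X i ω) (fun i => (hmeas i).neg)]
  refine iInf_congr fun M => ?_
  refine iSup_congr fun n => ?_
  have hp1 : ∀ f g : ℕ → ℤ, (∀ i < n, f i = g i) →
      (∃ m ≤ n, (M:ℤ) ≤ ∑ i ∈ Finset.range m, f i) →
      (∃ m ≤ n, (M:ℤ) ≤ ∑ i ∈ Finset.range m, g i) := by
    rintro f g hfg ⟨m, hm, h⟩
    exact ⟨m, hm, h.trans_eq (Finset.sum_congr rfl fun i hi =>
      hfg i (by have := Finset.mem_range.1 hi; omega))⟩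
  have hp2 : ∀ f g : ℕ → ℤ, (∀ i < n, f i = g i) →
      (∃ m ≤ n, (M:ℤ) ≤ ∑ i ∈ Finset.range m, -f i) →
      (∃ m ≤ n, (M:ℤ) ≤ ∑ i ∈ Finset.range m, -g i) := by
    rintro f g hfg ⟨m, hm, h⟩
    exact ⟨m, hm, h.trans_eq (Finset.sum_congr rfl fun i hi => by
      rw [hfg i (by have := Finset.mem_range.1 hi; omega)])⟩
  have h1 := srw_cylinder hmeas hindep hup hdown n
    (fun f => ∃ m ≤ n, (M:ℤ) ≤ ∑ i ∈ Finset.range m, f i) hp1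
  have h2 := srw_cylinder hmeas hindep hup hdown n
    (fun f => ∃ m ≤ n, (M:ℤ) ≤ ∑ i ∈ Finset.range m, -f i) hp2
  rw [show {ω | ∃ m ≤ n, (M:ℤ) ≤ ∑ i ∈ Finset.range m, X i ω}
      = {ω | (fun f : ℕ → ℤ => ∃ m ≤ n, (M:ℤ) ≤ ∑ i ∈ Finset.range m, f i) (fun i => X i ω)}
    from rfl, h1]
  rw [show {ω | ∃ m ≤ n, (M:ℤ) ≤ ∑ i ∈ Finset.range m, -X i ω}
      = {ω | (fun f : ℕ → ℤ => ∃ m ≤ n, (M:ℤ) ≤ ∑ i ∈ Finset.range m, -f i) (fun i => X i ω)}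
    from rfl, h2]
  congr 1
  norm_cast
  -- cards are equal via negation bijection
  have hkey : ∀ (ε : Fin n → Bool) (m : ℕ), m ≤ n →
      ∑ i ∈ Finset.range m, -srwPat n (fun j => !(ε j)) i = ∑ i ∈ Finset.range m, srwPat n ε i := by
    intro ε m hm
    refine Finset.sum_congr rfl fun i hi => ?_
    have hi' : i < n := by have := Finset.mem_range.1 hi; omega
    simp only [srwPat, dif_pos hi']
    rcases Bool.eq_false_or_eq_true (ε ⟨i, hi'⟩) with h | h <;> simp [h]
  have hkey2 : ∀ (ε : Fin n → Bool) (m : ℕ), m ≤ n →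
      ∑ i ∈ Finset.range m, srwPat n (fun j => !(ε j)) i = ∑ i ∈ Finset.range m, -srwPat n ε i := by
    intro ε m hm
    refine Finset.sum_congr rfl fun i hi => ?_
    have hi' : i < n := by have := Finset.mem_range.1 hi; omega
    simp only [srwPat, dif_pos hi']
    rcases Bool.eq_false_or_eq_true (ε ⟨i, hi'⟩) with h | h <;> simp [h]
  refine Finset.card_bij' (fun ε _ => fun j => !(ε j)) (fun ε _ => fun j => !(ε j)) ?_ ?_ ?_ ?_
  · intro ε hε
    simp only [Finset.mem_filter, Finset.mem_univ, true_and] at hε ⊢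
    obtain ⟨m, hm, h⟩ := hε
    exact ⟨m, hm, by rwa [hkey ε m hm]⟩
  · intro ε hε
    simp only [Finset.mem_filter, Finset.mem_univ, true_and] at hε ⊢
    obtain ⟨m, hm, h⟩ := hε
    exact ⟨m, hm, by rwa [hkey2 ε m hm]⟩
  · intro ε _; funext j; simp
  · intro ε _; funext j; simp

-- Kolmogorov zero-one law application

lemma srw_zero_one (hmeas : ∀ i, Measurable (X i))
    (hindep : iIndepFun X μ)
    (Y : ℕ → Ω → ℤ)
    (hY : ∀ i, Measurable[MeasurableSpace.comap (X i) inferInstance] (Y i))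
    (htail : MeasurableSet[Filter.limsup (fun i => MeasurableSpace.comap (X i) inferInstance) Filter.atTop]
      {ω | ∀ M : ℕ, ∃ n, (M:ℤ) ≤ ∑ i ∈ Finset.range n, Y i ω}) :
    μ {ω | ∀ M : ℕ, ∃ n, (M:ℤ) ≤ ∑ i ∈ Finset.range n, Y i ω} = 0 ∨
    μ {ω | ∀ M : ℕ, ∃ n, (M:ℤ) ≤ ∑ i ∈ Finset.range n, Y i ω} = 1 :=
  measure_zero_or_one_of_measurableSet_limsup_atTop
    (fun i => measurable_iff_comap_le.1 (hmeas i))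
    ((iIndepFun_iff_iIndep _ _ _).1 hindep) htail

lemma srw_bounded_null (hmeas : ∀ i, Measurable (X i))
    (hindep : iIndepFun X μ)
    (hup : ∀ i, μ {ω | X i ω = 1} = 1/2) (hdown : ∀ i, μ {ω | X i ω = -1} = 1/2)
    (M : ℕ) :
    μ {ω | ∀ n, |∑ i ∈ Finset.range n, X i ω| ≤ (M:ℤ)} = 0 := by
  set L : ℕ := 2*M+1 with hL
  set r : ℝ≥0∞ := 1 - (2⁻¹)^L with hr
  set F : ℕ → Set Ω := fun j => (⋂ i ∈ Finset.Ico (j*L) (j*L+L), X i ⁻¹' {(1:ℤ)})ᶜ with hF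
  have hFmeas : ∀ j, MeasurableSet (F j) :=
    fun j => (Finset.measurableSet_biInter _ fun i _ => (hmeas i) (int_meas _)).compl
  have hμF : ∀ j, μ (F j) = r := by
    intro j
    rw [hF]
    rw [prob_compl_eq_one_sub (Finset.measurableSet_biInter _ fun i _ => (hmeas i) (int_meas _))]
    rw [srw_atom hindep hup hdown _ (fun _ => (1:ℤ)) (fun i _ => Or.inl rfl)]
    rw [Nat.card_Ico, show j*L + L - j*L = L from by omega]
  -- helper for sub-σ-algebra membership
  have hXmem : ∀ (U : Set ℕ) (i : ℕ), i ∈ U → ∀ s : Set ℤ,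
      MeasurableSet[⨆ i ∈ U, MeasurableSpace.comap (X i) inferInstance] (X i ⁻¹' s) := by
    intro U i hi s
    have hle : MeasurableSpace.comap (X i) inferInstance
        ≤ ⨆ i ∈ U, MeasurableSpace.comap (X i) inferInstance :=
      le_iSup₂ (f := fun i (_ : i ∈ U) => MeasurableSpace.comap (X i) inferInstance) i hi
    exact hle _ ⟨s, int_meas s, rfl⟩
  have key : ∀ m, μ (⋂ j ∈ Finset.range m, F j) = r ^ m := by
    intro m
    induction m with
    | zero => simp
    | succ m ih =>
      rw [Finset.range_add_one, Finset.set_biInter_insert]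
      set Sm : Set ℕ := {i | i < m*L} with hSm
      set Tm : Set ℕ := {i | m*L ≤ i} with hTm
      have hdisj : Disjoint Sm Tm := by
        rw [Set.disjoint_left]; intro i h1 h2; simp [hSm, hTm] at h1 h2; omega
      have hindep2 := indep_iSup_of_disjoint
        (fun i => measurable_iff_comap_le.1 (hmeas i))
        ((iIndepFun_iff_iIndep _ _ _).1 hindep) hdisj
      have hFm : MeasurableSet[⨆ i ∈ Tm, MeasurableSpace.comap (X i) inferInstance] (F m) := by
        refine MeasurableSet.compl ?_
        refine MeasurableSet.biInter (Finset.Ico (m*L) (m*L+L)).countable_toSet ?_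
        intro i hi
        exact hXmem Tm i (by simp [hTm]; exact (Finset.mem_Ico.1 hi).1) _
      have hDm : MeasurableSet[⨆ i ∈ Sm, MeasurableSpace.comap (X i) inferInstance]
          (⋂ j ∈ Finset.range m, F j) := by
        refine MeasurableSet.biInter (Finset.range m).countable_toSet ?_
        intro j hj
        refine MeasurableSet.compl ?_
        refine MeasurableSet.biInter (Finset.Ico (j*L) (j*L+L)).countable_toSet ?_
        intro i hi
        refine hXmem Sm i ?_ _
        have h1 := (Finset.mem_Ico.1 hi).2
        have h2 := Finset.mem_range.1 hj
        simp only [hSm, Set.mem_setOf_eq]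
        have : (j+1)*L ≤ m*L := Nat.mul_le_mul_right L h2
        calc i < j*L + L := h1
          _ = (j+1)*L := by ring
          _ ≤ m*L := this
      have := (Indep_iff _ _ μ).1 hindep2 _ _ hDm hFm
      rw [Set.inter_comm] at this
      rw [this, ih, hμF m]
      ring
  have hsub : ∀ m, {ω | ∀ n, |∑ i ∈ Finset.range n, X i ω| ≤ (M:ℤ)} ⊆ ⋂ j ∈ Finset.range m, F j := by
    intro m ω hω
    refine Set.mem_iInter₂.2 fun j _ => ?_
    intro hmem
    have hall : ∀ i ∈ Finset.Ico (j*L) (j*L+L), X i ω = 1 := by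
      intro i hi
      have := Set.mem_iInter₂.1 hmem i hi
      simpa using this
    have hsplit : ∑ i ∈ Finset.range (j*L+L), X i ω
        = ∑ i ∈ Finset.range (j*L), X i ω + ∑ i ∈ Finset.Ico (j*L) (j*L+L), X i ω := by
      rw [Finset.range_eq_Ico, Finset.range_eq_Ico, Finset.sum_Ico_consecutive _ (Nat.zero_le _) (by omega)]
    have hIco : ∑ i ∈ Finset.Ico (j*L) (j*L+L), X i ω = (L:ℤ) := by
      rw [Finset.sum_congr rfl hall, Finset.sum_const, Nat.card_Ico,
        show j*L + L - j*L = L from by omega]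
      simp
    have h1 := hω (j*L)
    have h2 := hω (j*L+L)
    rw [abs_le] at h1 h2
    omega
  have hle : ∀ m, μ {ω | ∀ n, |∑ i ∈ Finset.range n, X i ω| ≤ (M:ℤ)} ≤ r^m :=
    fun m => le_trans (measure_mono (hsub m)) (le_of_eq (key m))
  have hr1 : r < 1 :=
    ENNReal.sub_lt_self ENNReal.one_ne_top one_ne_zero (pow_ne_zero _ (by norm_num))
  exact le_antisymm
    (ge_of_tendsto' (ENNReal.tendsto_pow_atTop_nhds_zero_of_lt_one hr1) hle)
    (zero_le)

-- discrete intermediate value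

lemma srw_ivt (f : ℕ → ℤ) (hstep : ∀ k, f (k+1) = f k + 1 ∨ f (k+1) = f k - 1) :
    ∀ (n a : ℕ) (d : ℤ), f a ≤ d → d ≤ f (a+n) → ∃ t, a ≤ t ∧ t ≤ a+n ∧ f t = d := by
  intro n
  induction n with
  | zero => intro a d h1 h2; exact ⟨a, le_rfl, le_rfl, le_antisymm h1 (by simpa using h2)⟩
  | succ n ih =>
    intro a d h1 h2
    by_cases he : f a = d
    · exact ⟨a, le_rfl, by omega, he⟩
    · have hlt : f a + 1 ≤ d := by omega
      have h1' : f (a+1) ≤ d := by rcases hstep a with h | h <;> omega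
      have h2' : d ≤ f ((a+1)+n) := by rwa [show (a+1)+n = a+(n+1) from by omega]
      obtain ⟨t, ht1, ht2, ht3⟩ := ih (a+1) d h1' h2'
      exact ⟨t, by omega, by omega, ht3⟩

lemma srw_abs_le (f : ℕ → ℤ) (h0 : f 0 = 0)
    (hstep : ∀ k, f (k+1) = f k + 1 ∨ f (k+1) = f k - 1) :
    ∀ n, |f n| ≤ (n:ℤ) := by
  intro n
  induction n with
  | zero => simp [h0]
  | succ n ih =>
    rw [abs_le] at ih ⊢
    rcases hstep n with h | h <;> (push_cast; omega)

lemma srw_unbdd_meas (Y : ℕ → Ω → ℤ) (hY : ∀ i, Measurable (Y i)) :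
    MeasurableSet {ω | ∀ M : ℕ, ∃ n, (M:ℤ) ≤ ∑ i ∈ Finset.range n, Y i ω} := by
  have hset : {ω | ∀ M : ℕ, ∃ n, (M:ℤ) ≤ ∑ i ∈ Finset.range n, Y i ω}
      = ⋂ M : ℕ, ⋃ n : ℕ, (fun ω => ∑ i ∈ Finset.range n, Y i ω) ⁻¹' Set.Ici (M:ℤ) := by
    ext ω
    simp [Set.mem_iInter, Set.mem_iUnion, Set.mem_preimage, Set.mem_Ici]
  rw [hset]
  exact MeasurableSet.iInter fun M => MeasurableSet.iUnion fun n =>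
    (Finset.measurable_sum _ fun i _ => hY i) (int_meas _)

end SRWAux

/-- **Recurrence of the simple symmetric random walk on ℤ.** If `(X i)` are
i.i.d. steps taking values `1` and `-1` with probability `1/2` each, and
`S t = s₀ + ∑_{i < t} X i`, then for any start `s₀` and goal `g`, the walk
hits `g` at some positive time almost surely: the first hitting time
`τ = inf {t > 0 : S t = g}` is finite with probability 1. -/
theorem simple_random_walk_hits_goal_as
    {Ω : Type*} [MeasurableSpace Ω] (μ : Measure Ω) [IsProbabilityMeasure μ]
    (X : ℕ → Ω → ℤ) (hmeas : ∀ i, Measurable (X i))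
    (hindep : iIndepFun X μ)
    (hup : ∀ i, μ {ω | X i ω = 1} = 1/2)
    (hdown : ∀ i, μ {ω | X i ω = -1} = 1/2)
    (s₀ g : ℤ) :
    μ {ω | ∃ t : ℕ, 0 < t ∧ s₀ + ∑ i ∈ Finset.range t, X i ω = g} = 1 := by
  have hXc : ∀ i, Measurable[MeasurableSpace.comap (X i) inferInstance] (X i) :=
    fun i => measurable_iff_comap_le.2 le_rfl
  have hYc : ∀ i, Measurable[MeasurableSpace.comap (X i) inferInstance] (fun ω => -X i ω) :=
    fun i => (hXc i).neg
  have hAmeas : MeasurableSet {ω | ∀ M : ℕ, ∃ n, (M:ℤ) ≤ ∑ i ∈ Finset.range n, X i ω} :=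
    srw_unbdd_meas X hmeas
  have hBmeas : MeasurableSet {ω | ∀ M : ℕ, ∃ n, (M:ℤ) ≤ ∑ i ∈ Finset.range n, -X i ω} :=
    srw_unbdd_meas (fun i ω => -X i ω) (fun i => (hmeas i).neg)
  have hA01 := srw_zero_one hmeas hindep X hXc (srw_tail_meas X hXc)
  have hAB := srw_symm hmeas hindep hup hdown
  -- the walk is a.s. not bounded
  have hCnull : μ (⋃ M : ℕ, {ω | ∀ n, |∑ i ∈ Finset.range n, X i ω| ≤ (M:ℤ)}) = 0 :=
    measure_iUnion_null fun M => srw_bounded_null hmeas hindep hup hdown M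
  have hsubC : {ω | ∀ M : ℕ, ∃ n, (M:ℤ) ≤ ∑ i ∈ Finset.range n, X i ω}ᶜ
      ∩ {ω | ∀ M : ℕ, ∃ n, (M:ℤ) ≤ ∑ i ∈ Finset.range n, -X i ω}ᶜ
      ⊆ ⋃ M : ℕ, {ω | ∀ n, |∑ i ∈ Finset.range n, X i ω| ≤ (M:ℤ)} := by
    rintro ω ⟨hA', hB'⟩
    simp only [Set.mem_compl_iff, Set.mem_setOf_eq, not_forall, not_exists, not_le] at hA' hB'
    obtain ⟨M₁, h₁⟩ := hA'
    obtain ⟨M₂, h₂⟩ := hB'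
    refine Set.mem_iUnion.2 ⟨M₁ + M₂, fun n => ?_⟩
    have hb1 := h₁ n
    have hb2 := h₂ n
    rw [Finset.sum_neg_distrib] at hb2
    rw [abs_le]
    push_cast
    omega
  -- conclude μ A = 1
  have hA1 : μ {ω | ∀ M : ℕ, ∃ n, (M:ℤ) ≤ ∑ i ∈ Finset.range n, X i ω} = 1 := by
    rcases hA01 with h0 | h1
    · exfalso
      have hB0 : μ {ω | ∀ M : ℕ, ∃ n, (M:ℤ) ≤ ∑ i ∈ Finset.range n, -X i ω} = 0 := by
        rw [← hAB]; exact h0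
      have hU0 : μ ({ω | ∀ M : ℕ, ∃ n, (M:ℤ) ≤ ∑ i ∈ Finset.range n, X i ω}
          ∪ {ω | ∀ M : ℕ, ∃ n, (M:ℤ) ≤ ∑ i ∈ Finset.range n, -X i ω}) = 0 :=
        measure_union_null h0 hB0
      have h1' : μ (({ω | ∀ M : ℕ, ∃ n, (M:ℤ) ≤ ∑ i ∈ Finset.range n, X i ω}
          ∪ {ω | ∀ M : ℕ, ∃ n, (M:ℤ) ≤ ∑ i ∈ Finset.range n, -X i ω})ᶜ) = 1 := by
        rw [prob_compl_eq_one_sub (hAmeas.union hBmeas), hU0]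
        simp
      have h0' : μ (({ω | ∀ M : ℕ, ∃ n, (M:ℤ) ≤ ∑ i ∈ Finset.range n, X i ω}
          ∪ {ω | ∀ M : ℕ, ∃ n, (M:ℤ) ≤ ∑ i ∈ Finset.range n, -X i ω})ᶜ) = 0 := by
        refine measure_mono_null ?_ hCnull
        rw [Set.compl_union]
        exact hsubC
      rw [h0'] at h1'
      exact zero_ne_one h1'
    · exact h1
  have hB1 : μ {ω | ∀ M : ℕ, ∃ n, (M:ℤ) ≤ ∑ i ∈ Finset.range n, -X i ω} = 1 := by
    rw [← hAB]; exact hA1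
  -- the sign set
  have hGmeas : MeasurableSet {ω | ∀ i, X i ω = 1 ∨ X i ω = -1} := by
    have : {ω | ∀ i, X i ω = 1 ∨ X i ω = -1}
        = ⋂ i, ({ω | X i ω = 1} ∪ {ω | X i ω = -1}) := by
      ext ω; simp [Set.mem_iInter, Set.mem_union]
    rw [this]
    exact MeasurableSet.iInter fun i =>
      ((hmeas i) (measurableSet_singleton 1)).union ((hmeas i) (measurableSet_singleton (-1)))
  have hG1 : μ {ω | ∀ i, X i ω = 1 ∨ X i ω = -1} = 1 := by
    rw [← prob_compl_eq_zero_iff hGmeas]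
    have := srw_ae_sign hmeas hup hdown
    rw [ae_iff] at this
    simpa [Set.compl_setOf] using this
  -- the full-measure good set is contained in the target
  have hsubT : ({ω | ∀ M : ℕ, ∃ n, (M:ℤ) ≤ ∑ i ∈ Finset.range n, X i ω}
        ∩ {ω | ∀ M : ℕ, ∃ n, (M:ℤ) ≤ ∑ i ∈ Finset.range n, -X i ω})
        ∩ {ω | ∀ i, X i ω = 1 ∨ X i ω = -1}
      ⊆ {ω | ∃ t : ℕ, 0 < t ∧ s₀ + ∑ i ∈ Finset.range t, X i ω = g} := by
    rintro ω ⟨⟨hA, hB⟩, hG⟩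
    simp only [Set.mem_setOf_eq] at hA hB hG ⊢
    let f : ℕ → ℤ := fun n => ∑ i ∈ Finset.range n, X i ω
    have hstep : ∀ k, f (k+1) = f k + 1 ∨ f (k+1) = f k - 1 := by
      intro k
      show ∑ i ∈ Finset.range (k+1), X i ω = _ ∨ ∑ i ∈ Finset.range (k+1), X i ω = _
      simp only [Finset.sum_range_succ]
      rcases hG k with h | h
      · left; rw [h]
      · right; rw [h]; ring
    have h0 : f 0 = 0 := by simp [f]
    have habs := srw_abs_le f h0 hstep
    set d : ℤ := g - s₀ with hd
    -- go below min d (-1)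
    obtain ⟨a, ha0⟩ := hB (max 1 (-d)).toNat
    rw [Finset.sum_neg_distrib] at ha0
    have ha : ((max 1 (-d)).toNat : ℤ) ≤ -f a := ha0
    have hmax1 : (max 1 (-d) : ℤ) ≤ ((max 1 (-d)).toNat : ℤ) := Int.self_le_toNat _
    have hfa1 : f a ≤ -1 := by
      have := le_max_left (1:ℤ) (-d); omega
    have hfad : f a ≤ d := by
      have := le_max_right (1:ℤ) (-d); omega
    have ha1 : 1 ≤ a := by
      rcases Nat.eq_zero_or_pos a with h | h
      · exfalso; rw [h, h0] at hfa1; omega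
      · omega
    -- go above max (a+1) d
    obtain ⟨b, hb0⟩ := hA (max ((a:ℤ)+1) d).toNat
    have hb : ((max ((a:ℤ)+1) d).toNat : ℤ) ≤ f b := hb0
    have hmax2 : (max ((a:ℤ)+1) d : ℤ) ≤ ((max ((a:ℤ)+1) d).toNat : ℤ) := Int.self_le_toNat _
    have hfb1 : (a:ℤ)+1 ≤ f b := by
      have := le_max_left ((a:ℤ)+1) d; omega
    have hfbd : d ≤ f b := by
      have := le_max_right ((a:ℤ)+1) d; omega
    have hab : a < b := by
      have h1 := habs b
      rw [abs_le] at h1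
      omega
    obtain ⟨t, ht1, ht2, ht3⟩ := srw_ivt f hstep (b - a) a d hfad
      (by rw [show a + (b - a) = b from by omega]; exact hfbd)
    have ht4 : s₀ + ∑ i ∈ Finset.range t, X i ω = g := by
      have : f t = ∑ i ∈ Finset.range t, X i ω := rfl
      omega
    exact ⟨t, by omega, ht4⟩
  have hfull : μ (({ω | ∀ M : ℕ, ∃ n, (M:ℤ) ≤ ∑ i ∈ Finset.range n, X i ω}
        ∩ {ω | ∀ M : ℕ, ∃ n, (M:ℤ) ≤ ∑ i ∈ Finset.range n, -X i ω})
        ∩ {ω | ∀ i, X i ω = 1 ∨ X i ω = -1}) = 1 := by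
    rw [← prob_compl_eq_zero_iff (((hAmeas.inter hBmeas)).inter hGmeas)]
    rw [Set.compl_inter, Set.compl_inter]
    refine measure_union_null (measure_union_null ?_ ?_) ?_
    · exact (prob_compl_eq_zero_iff hAmeas).2 hA1
    · exact (prob_compl_eq_zero_iff hBmeas).2 hB1
    · exact (prob_compl_eq_zero_iff hGmeas).2 hG1
  refine le_antisymm (prob_le_one) ?_
  calc (1:ℝ≥0∞) = _ := hfull.symm
    _ ≤ _ := measure_mono hsubT
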